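/- Breaker (moving second) has a winning strategy in the Maker-Breaker game on the hypergraph with vertex set {x₁,...,x₆, u, v} (eight distinct vertices) and hyperedges {x₁,x₂,x₃}, {x₃,x₄,u}, {x₅,x₆,v}, {u,v}. -/
import Mathlib


/-- `MakerWins E t free M B` : in the Maker-Breaker game with winning sets `E`,
unclaimed vertices `free`, Maker's vertices `M` and Breaker's vertices `B`, the
player to move being Maker if `t = true` and Breaker if `t = false`, Maker has a
strategy ensuring he eventually occupies all vertices of some hyperedge. -/
inductive MakerWins {α : Type*} [DecidableEq α] (E : Finset (Finset α)) :
    Bool → Finset α → Finset α → Finset α → Prop where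
  | won {t : Bool} {free M B : Finset α} (e : Finset α) (he : e ∈ E)
      (hsub : e ⊆ M) : MakerWins E t free M B
  | makerMove {free M B : Finset α} (v : α) (hv : v ∈ free)
      (h : MakerWins E false (free.erase v) (insert v M) B) :
      MakerWins E true free M B
  | breakerMove {free M B : Finset α} (hne : free.Nonempty)
      (h : ∀ v ∈ free, MakerWins E true (free.erase v) M (insert v B)) :
      MakerWins E false free M B

/-- `BreakerWins E t free M B` : in the Maker-Breaker game with winning sets `E`,
unclaimed vertices `free`, Maker's vertices `M` and Breaker's vertices `B`, the
player to move being Maker if `t = true` and Breaker if `t = false`, Breaker has a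
strategy ensuring that when all vertices are claimed, no hyperedge is fully
claimed by Maker. -/
inductive BreakerWins {α : Type*} [DecidableEq α] (E : Finset (Finset α)) :
    Bool → Finset α → Finset α → Finset α → Prop where
  | gameOver {t : Bool} {M B : Finset α} (h : ∀ e ∈ E, ¬ e ⊆ M) :
      BreakerWins E t ∅ M B
  | makerMove {free M B : Finset α} (h0 : ∀ e ∈ E, ¬ e ⊆ M)
      (h : ∀ v ∈ free, BreakerWins E false (free.erase v) (insert v M) B) :
      BreakerWins E true free M B
  | breakerMove {free M B : Finset α} (v : α) (h0 : ∀ e ∈ E, ¬ e ⊆ M)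
      (hv : v ∈ free)
      (h : BreakerWins E true (free.erase v) M (insert v B)) :
      BreakerWins E false free M B

/-- Pairing-strategy search: Breaker always answers Maker's move `v` with `p v`. -/
def pairWins {α : Type*} [DecidableEq α] (E : Finset (Finset α)) (p : α → α) :
    ℕ → Finset α → Finset α → Bool
  | 0, free, M => decide ((∀ e ∈ E, ¬ e ⊆ M) ∧ free = ∅)
  | n+1, free, M =>
    decide (∀ e ∈ E, ¬ e ⊆ M) &&
      (decide (free = ∅) ||
        decide (∀ v ∈ free, p v ∈ free.erase v ∧
          pairWins E p n ((free.erase v).erase (p v)) (insert v M) = true))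

lemma BreakerWins.h0 {α : Type*} [DecidableEq α] {E : Finset (Finset α)}
    {t free M B} (h : BreakerWins E t free M B) : ∀ e ∈ E, ¬ e ⊆ M := by
  cases h <;> assumption

lemma pairWins_sound {α : Type*} [DecidableEq α] {E : Finset (Finset α)} {p : α → α} :
    ∀ n (free M B : Finset α), pairWins E p n free M = true →
      BreakerWins E true free M B := by
  intro n
  induction n with
  | zero =>
    intro free M B h
    simp only [pairWins, decide_eq_true_eq] at h
    obtain ⟨h0, rfl⟩ := h
    exact .gameOver h0
  | succ n ih =>
    intro free M B h
    simp only [pairWins, Bool.and_eq_true, Bool.or_eq_true, decide_eq_true_eq] at h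
    obtain ⟨h0, h1⟩ := h
    rcases h1 with rfl | hall
    · exact .gameOver h0
    · refine .makerMove h0 fun v hv => ?_
      obtain ⟨hp, hrec⟩ := hall v hv
      have hb := ih _ _ (insert (p v) B) hrec
      exact .breakerMove (p v) hb.h0 hp hb

lemma BreakerWins.map {α β : Type*} [DecidableEq α] [DecidableEq β]
    (f : α → β) (hf : Function.Injective f) {E : Finset (Finset α)}
    {t : Bool} {free M B : Finset α} (h : BreakerWins E t free M B) :
    BreakerWins (E.image (Finset.image f)) t (free.image f) (M.image f) (B.image f) := by
  induction h with
  | gameOver h =>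
    rw [Finset.image_empty]
    refine .gameOver fun e' he' hsub => ?_
    obtain ⟨e, he, rfl⟩ := Finset.mem_image.mp he'
    exact h e he ((Finset.image_subset_image_iff hf).mp hsub)
  | makerMove h0 h ih =>
    refine .makerMove (fun e' he' hsub => ?_) fun w hw => ?_
    · obtain ⟨e, he, rfl⟩ := Finset.mem_image.mp he'
      exact h0 e he ((Finset.image_subset_image_iff hf).mp hsub)
    · obtain ⟨v, hv, rfl⟩ := Finset.mem_image.mp hw
      have := ih v hv
      rwa [Finset.image_erase hf, Finset.image_insert] at this
  | breakerMove v h0 hv h ih =>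
    refine .breakerMove (f v) (fun e' he' hsub => ?_) (Finset.mem_image_of_mem f hv) ?_
    · obtain ⟨e, he, rfl⟩ := Finset.mem_image.mp he'
      exact h0 e he ((Finset.image_subset_image_iff hf).mp hsub)
    · rwa [Finset.image_erase hf, Finset.image_insert] at ih

lemma key : BreakerWins
    ({{0,1,2},{2,3,6},{4,5,7},{6,7}} : Finset (Finset (Fin 8)))
    true ({0,1,2,3,4,5,6,7} : Finset (Fin 8)) ∅ ∅ :=
  pairWins_sound 4 _ _ _
    (by decide : pairWins ({{0,1,2},{2,3,6},{4,5,7},{6,7}} : Finset (Finset (Fin 8)))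
      ![1,0,3,2,5,4,7,6] 4 ({0,1,2,3,4,5,6,7} : Finset (Fin 8)) ∅ = true)

/-- Breaker (moving second) wins Maker-Breaker on the hypergraph with the eight
distinct vertices `{x₁,…,x₆,u,v}` and hyperedges `{x₁,x₂,x₃}`, `{x₃,x₄,u}`,
`{x₅,x₆,v}`, `{u,v}`. -/
theorem breakerWins_H2 {α : Type*} [DecidableEq α] (x₁ x₂ x₃ x₄ x₅ x₆ u v : α)
    (hnd : ([x₁, x₂, x₃, x₄, x₅, x₆, u, v] : List α).Nodup) :
    BreakerWins
      ({{x₁, x₂, x₃}, {x₃, x₄, u}, {x₅, x₆, v}, {u, v}} : Finset (Finset α))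
      true ({x₁, x₂, x₃, x₄, x₅, x₆, u, v} : Finset α) ∅ ∅ := by
  have hf : Function.Injective
      (fun i : Fin 8 => ([x₁, x₂, x₃, x₄, x₅, x₆, u, v] : List α).get i) :=
    List.nodup_iff_injective_get.mp hnd
  have h := key.map _ hf
  simp only [Finset.image_insert, Finset.image_singleton, Finset.image_empty] at h
  exact h
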